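/- arXiv:2506.04637 — 2 statements merged into one kernel-verified Lean document; each statement's English description precedes it below -/
import Mathlib

section
/- For a mixture of singlet states ρ = Σ_{λ,a,b} q_{λab} |λ;a,b⟩⟨λ;a,b| with q_{λab} ≥ 0 summing to 1, the trace norm of the partial transpose equals ‖ρ^{T_A}‖₁ = Σ_{λ,a,b} q_{λab} d_λ, and hence the logarithmic negativity is E^N(ρ) = log(Σ_λ p_λ d_λ) where p_λ = Σ_{a,b} q_{λab}. -/
open Finset
open scoped ComplexOrder

noncomputable section

/-- Outer product `|v⟩⟨v|` as a matrix. -/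
def outer {I : Type*} (v : I → ℂ) : Matrix I I ℂ := fun i j => v i * star (v j)

/-- Reduced density matrix on subsystem `A` of a bipartite pure state. -/
def redA {IA IB : Type*} [Fintype IB] (ψ : IA × IB → ℂ) : Matrix IA IA ℂ :=
  fun i i' => ∑ j : IB, ψ (i, j) * star (ψ (i', j))

lemma redA_isHermitian {IA IB : Type*} [Fintype IB] (ψ : IA × IB → ℂ) :
    (redA ψ).IsHermitian := by
  unfold Matrix.IsHermitian
  ext i i'
  simp only [Matrix.conjTranspose_apply, redA, star_sum, star_mul', star_star]
  exact Finset.sum_congr rfl fun j _ => mul_comm _ _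

/-- Von Neumann entropy `-Tr(ρ log ρ)` computed via eigenvalues
(with the convention `0 log 0 = 0`, automatic since `Real.log 0 = 0`). -/
def vNEntropy {I : Type*} [Fintype I] [DecidableEq I] (M : Matrix I I ℂ)
    (h : M.IsHermitian) : ℝ :=
  -∑ i, h.eigenvalues i * Real.log (h.eigenvalues i)

/-- Bipartite entanglement entropy of a pure state: `S(Tr_B |ψ⟩⟨ψ|)`. -/
def entEntropy {IA IB : Type*} [Fintype IA] [Fintype IB] [DecidableEq IA]
    (ψ : IA × IB → ℂ) : ℝ :=
  vNEntropy (redA ψ) (redA_isHermitian ψ)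

/-- Partial transpose with respect to subsystem `A`. -/
def ptA {IA IB : Type*} (X : Matrix (IA × IB) (IA × IB) ℂ) :
    Matrix (IA × IB) (IA × IB) ℂ :=
  fun p p' => X (p'.1, p.2) (p.1, p'.2)

/-- Absolute value `|X| = √(XᴴX)` of a matrix. -/
def matAbs {I : Type*} [Fintype I] [DecidableEq I] (X : Matrix I I ℂ) : Matrix I I ℂ :=
  (Matrix.posSemidef_conjTranspose_mul_self X).1.eigenvectorUnitary.1 *
    Matrix.diagonal ((↑) ∘ (Real.sqrt ·) ∘ (Matrix.posSemidef_conjTranspose_mul_self X).1.eigenvalues) *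
    (star (Matrix.posSemidef_conjTranspose_mul_self X).1.eigenvectorUnitary : Matrix I I ℂ)

/-- Trace norm `‖X‖₁ = Tr √(XᴴX)`. -/
def traceNorm {I : Type*} [Fintype I] [DecidableEq I] (X : Matrix I I ℂ) : ℝ :=
  (matAbs X).trace.re

/-! The partial transpose of `|λ;a,b⟩⟨λ;a,b|` is
`d_λ⁻¹ ∑_{m,m'} η_m η̄_{m'} |ū_{m'} ⊗ w_m⟩⟨ū_m ⊗ w_{m'}|`. The product vectors
`ū_{λma} ⊗ w_{λm'b}` form an orthonormal family, and `ρ^{T_A}` sends the one labelled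
`(λ,a,b,m,m')` to a multiple, of modulus `q_{λab}/d_λ`, of the one labelled `(λ,a,b,m',m)`.
An operator permuting an orthonormal family up to scalars `c_k` has `|X| = ∑ |c_k| |v_k⟩⟨v_k|`,
so `‖ρ^{T_A}‖₁ = ∑_k |c_k| = ∑ q_{λab} d_λ²/d_λ`. -/

open Matrix

section MatAbs

variable {I : Type*} [Fintype I] [DecidableEq I]

open scoped MatrixOrder in
theorem matAbs_eq_cfcAbs (X : Matrix I I ℂ) : matAbs X = CFC.abs X := by
  have hX := posSemidef_conjTranspose_mul_self X
  rw [CFC.abs, CFC.sqrt_eq_cfc, star_eq_conjTranspose,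
    cfc_nnreal_eq_real _ _ (nonneg_iff_posSemidef.mpr hX), hX.1.cfc_eq]
  simp only [IsHermitian.cfc, matAbs, Unitary.conjStarAlgAut_apply]
  congr 3
  funext i
  simp [hX.eigenvalues_nonneg i]

open scoped MatrixOrder in
theorem matAbs_eq_of_mul_self {X A : Matrix I I ℂ} (hA : A.PosSemidef) (h : A * A = Xᴴ * X) :
    matAbs X = A := by
  rw [matAbs_eq_cfcAbs, CFC.abs, star_eq_conjTranspose]
  exact CFC.sqrt_unique h (nonneg_iff_posSemidef.mpr hA)

end MatAbs

section OrthonormalFamily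

variable {R K P : Type*} [CommSemiring R] [StarRing R]

theorem conjTranspose_sum_smul_vecMulVec [Fintype K] (v : K → P → R) (τ : K → K) (c : K → R) :
    (∑ k, c k • vecMulVec (v (τ k)) (star (v k)))ᴴ
      = ∑ k, star (c k) • vecMulVec (v k) (star (v (τ k))) := by
  simp only [conjTranspose_sum, conjTranspose_smul, conjTranspose_vecMulVec, star_star]

variable [Fintype P]

def IsOrthonormalFamily (v : K → P → R) : Prop :=
  (∀ k, star (v k) ⬝ᵥ v k = 1) ∧ Pairwise fun k k' => star (v k) ⬝ᵥ v k' = 0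

theorem IsOrthonormalFamily.comp {K' : Type*} {v : K → P → R} (hv : IsOrthonormalFamily v)
    {f : K' → K} (hf : Function.Injective f) : IsOrthonormalFamily (v ∘ f) :=
  ⟨fun k => hv.1 (f k), fun _ _ h => hv.2 (hf.ne h)⟩

theorem IsOrthonormalFamily.conj {v : K → P → R} (hv : IsOrthonormalFamily v) :
    IsOrthonormalFamily fun k => star (v k) := by
  refine ⟨fun k => ?_, fun k k' h => ?_⟩ <;> dsimp only
  · rw [star_star, dotProduct_comm, hv.1]
  · rw [star_star, dotProduct_comm, hv.2 h.symm]

/-- The vector `x ⊗ y` under `R^P ⊗ R^Q ≅ R^(P × Q)`. -/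
def kronVec {Q : Type*} (x : P → R) (y : Q → R) : P × Q → R := fun p => x p.1 * y p.2

theorem star_kronVec_dotProduct_kronVec {Q : Type*} [Fintype Q] (x x' : P → R) (y y' : Q → R) :
    star (kronVec x y) ⬝ᵥ kronVec x' y' = (star x ⬝ᵥ x') * (star y ⬝ᵥ y') := by
  simp only [dotProduct, Fintype.sum_prod_type, Finset.sum_mul_sum, kronVec, Pi.star_apply,
    star_mul']
  exact Finset.sum_congr rfl fun _ _ => Finset.sum_congr rfl fun _ _ => by ring

theorem IsOrthonormalFamily.kron {K' Q : Type*} [Fintype Q] {x : K → P → R} {y : K' → Q → R}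
    (hx : IsOrthonormalFamily x) (hy : IsOrthonormalFamily y) :
    IsOrthonormalFamily fun k : K × K' => kronVec (x k.1) (y k.2) := by
  refine ⟨fun k => ?_, fun k k' h => ?_⟩ <;> dsimp only
  · rw [star_kronVec_dotProduct_kronVec, hx.1, hy.1, one_mul]
  · rw [star_kronVec_dotProduct_kronVec]
    rcases eq_or_ne k.1 k'.1 with h₁ | h₁
    · rw [hy.2 fun h₂ => h (Prod.ext h₁ h₂), mul_zero]
    · rw [hx.2 h₁, zero_mul]

theorem isOrthonormalFamily_subtype_of_forall_ite [DecidableEq K] {p : K → Prop}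
    {v : K → P → R} (hv : ∀ k k', p k → p k' → star (v k) ⬝ᵥ v k' = if k = k' then 1 else 0) :
    IsOrthonormalFamily fun k : Subtype p => v k :=
  ⟨fun k => (hv k k k.2 k.2).trans (if_pos rfl),
    fun k k' h => (hv k k' k.2 k'.2).trans (if_neg (Subtype.coe_ne_coe.mpr h))⟩

variable [Fintype K]

theorem IsOrthonormalFamily.sum_smul_vecMulVec_mul {v : K → P → R} (hv : IsOrthonormalFamily v)
    {τ : K → K} (hτ : Function.Injective τ) (c c' : K → R) :
    (∑ k, c k • vecMulVec (v k) (star (v (τ k)))) * ∑ k, c' k • vecMulVec (v (τ k)) (star (v k))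
      = ∑ k, (c k * c' k) • vecMulVec (v k) (star (v k)) := by
  rw [Finset.sum_mul_sum]
  refine Finset.sum_congr rfl fun k _ => ?_
  rw [Finset.sum_eq_single k, smul_mul_smul_comm, vecMulVec_mul_vecMulVec, hv.1, one_smul]
  · intro k' _ hk'
    rw [smul_mul_smul_comm, vecMulVec_mul_vecMulVec, hv.2 (hτ.ne hk'.symm), zero_smul,
      vecMulVec_zero, smul_zero]
  · simp

end OrthonormalFamily

section TraceNorm

variable {K P : Type*} [Fintype K] [Fintype P] [DecidableEq P]

/-- `|X| = ∑ ‖c k‖ |v k⟩⟨v k|`, a positive matrix whose square is `Xᴴ X`. -/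
theorem IsOrthonormalFamily.traceNorm_sum_smul_vecMulVec {v : K → P → ℂ}
    (hv : IsOrthonormalFamily v) {τ : K → K} (hτ : Function.Injective τ) (c : K → ℂ) :
    traceNorm (∑ k, c k • vecMulVec (v (τ k)) (star (v k))) = ∑ k, ‖c k‖ := by
  set A : Matrix P P ℂ := ∑ k, (‖c k‖ : ℂ) • vecMulVec (v k) (star (v k))
  have hA : A.PosSemidef := posSemidef_sum _ fun k _ =>
    (posSemidef_vecMulVec_self_star (v k)).smul (Complex.zero_le_real.mpr (norm_nonneg _))
  have hAA : A * A = (∑ k, c k • vecMulVec (v (τ k)) (star (v k)))ᴴ *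
      ∑ k, c k • vecMulVec (v (τ k)) (star (v k)) := by
    rw [conjTranspose_sum_smul_vecMulVec, hv.sum_smul_vecMulVec_mul hτ]
    refine (hv.sum_smul_vecMulVec_mul (τ := id) Function.injective_id _ _).trans ?_
    simp only [← sq, Complex.star_def, Complex.conj_mul']
  rw [traceNorm, matAbs_eq_of_mul_self hA hAA, trace_sum, Complex.re_sum]
  refine Finset.sum_congr rfl fun k _ => ?_
  rw [trace_smul, trace_vecMulVec, dotProduct_comm, hv.1, smul_eq_mul, mul_one, Complex.ofReal_re]

end TraceNorm

section PartialTranspose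

variable {IA IB : Type*}

theorem vecMulVec_sum_sum {R n m ι κ : Type*} [NonUnitalNonAssocSemiring R] (s : Finset ι)
    (t : Finset κ) (x : ι → n → R) (y : κ → m → R) :
    vecMulVec (∑ i ∈ s, x i) (∑ j ∈ t, y j) = ∑ i ∈ s, ∑ j ∈ t, vecMulVec (x i) (y j) := by
  ext
  simp only [vecMulVec_apply, Finset.sum_apply, Matrix.sum_apply, Finset.sum_mul_sum]

theorem outer_eq_vecMulVec {I : Type*} (v : I → ℂ) : outer v = vecMulVec v (star v) :=
  rfl

theorem ptA_sum {ι : Type*} (s : Finset ι) (X : ι → Matrix (IA × IB) (IA × IB) ℂ) :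
    ptA (∑ i ∈ s, X i) = ∑ i ∈ s, ptA (X i) := by
  ext
  simp only [ptA, Matrix.sum_apply]

theorem ptA_smul (c : ℂ) (X : Matrix (IA × IB) (IA × IB) ℂ) : ptA (c • X) = c • ptA X :=
  rfl

theorem ptA_vecMulVec_kronVec (x x' : IA → ℂ) (y y' : IB → ℂ) :
    ptA (vecMulVec (kronVec x y) (star (kronVec x' y')))
      = vecMulVec (kronVec (star x') y) (star (kronVec (star x) y')) := by
  ext
  simp only [ptA, vecMulVec_apply, kronVec, Pi.star_apply, star_mul', star_star]
  ring

theorem ptA_outer_sum_smul_kronVec {ι : Type*} (s : Finset ι) (η : ι → ℂ) (x : ι → IA → ℂ)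
    (y : ι → IB → ℂ) :
    ptA (outer (∑ m ∈ s, η m • kronVec (x m) (y m)))
      = ∑ m ∈ s, ∑ m' ∈ s, (η m * star (η m')) •
          vecMulVec (kronVec (star (x m')) (y m)) (star (kronVec (star (x m)) (y m'))) := by
  simp only [outer_eq_vecMulVec, star_sum, vecMulVec_sum_sum, ptA_sum, star_smul, smul_vecMulVec,
    vecMulVec_smul, smul_smul, ptA_smul, ptA_vecMulVec_kronVec]
  simp only [mul_comm]

end PartialTranspose

section SingletMixture

variable {IA IB Λ α β : Type*} {d : Λ → ℕ}

/-- Labels `(λ, a, b, m, m')` of the product vectors `ū_{λ m a} ⊗ w_{λ m' b}`. -/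
abbrev SingletLabel (d : Λ → ℕ) (α β : Type*) : Type _ := Σ l, α × β × Fin (d l) × Fin (d l)

def SingletLabel.swap (k : SingletLabel d α β) : SingletLabel d α β :=
  ⟨k.1, k.2.1, k.2.2.1, k.2.2.2.2, k.2.2.2.1⟩

theorem SingletLabel.swap_injective :
    Function.Injective (SingletLabel.swap : SingletLabel d α β → SingletLabel d α β) :=
  Function.Involutive.injective fun _ => rfl

def singletProductVec (u : Λ → ℕ → α → IA → ℂ) (w : Λ → ℕ → β → IB → ℂ)
    (k : SingletLabel d α β) : IA × IB → ℂ :=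
  kronVec (star (u k.1 k.2.2.2.1 k.2.1)) (w k.1 k.2.2.2.2 k.2.2.1)

theorem isOrthonormalFamily_singletProductVec [Fintype IA] [Fintype IB]
    [DecidableEq Λ] [DecidableEq α] [DecidableEq β]
    {u : Λ → ℕ → α → IA → ℂ} {w : Λ → ℕ → β → IB → ℂ}
    (hu : ∀ l m a l' m' a', m < d l → m' < d l' →
      ∑ i : IA, star (u l m a i) * u l' m' a' i = if (l, m, a) = (l', m', a') then 1 else 0)
    (hw : ∀ l m b l' m' b', m < d l → m' < d l' →
      ∑ j : IB, star (w l m b j) * w l' m' b' j = if (l, m, b) = (l', m', b') then 1 else 0) :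
    IsOrthonormalFamily (singletProductVec (d := d) u w) := by
  have hU := isOrthonormalFamily_subtype_of_forall_ite (p := fun x : Λ × ℕ × α => x.2.1 < d x.1)
    (v := fun x => u x.1 x.2.1 x.2.2) fun k k' hk hk' => hu _ _ _ _ _ _ hk hk'
  have hW := isOrthonormalFamily_subtype_of_forall_ite (p := fun x : Λ × ℕ × β => x.2.1 < d x.1)
    (v := fun x => w x.1 x.2.1 x.2.2) fun k k' hk hk' => hw _ _ _ _ _ _ hk hk'
  let e : SingletLabel d α β →
      {x : Λ × ℕ × α // x.2.1 < d x.1} × {x : Λ × ℕ × β // x.2.1 < d x.1} := fun k =>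
    (⟨(k.1, k.2.2.2.1, k.2.1), k.2.2.2.1.isLt⟩, ⟨(k.1, k.2.2.2.2, k.2.2.1), k.2.2.2.2.isLt⟩)
  have he : Function.Injective e := by
    rintro ⟨l, a, b, m, m'⟩ ⟨l', a', b', n, n'⟩ h
    simp only [e, Prod.mk.injEq, Subtype.mk.injEq] at h
    obtain ⟨⟨rfl, hm, rfl⟩, ⟨-, hm', rfl⟩⟩ := h
    rw [Fin.val_inj] at hm hm'
    rw [hm, hm']
  -- without the ascription, unifying `_ ∘ e` with `singletProductVec u w` times out
  exact ((hU.conj.kron hW).comp he :)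

def singletCoeff (q : Λ → α → β → ℝ) (η : Λ → ℕ → ℂ) (k : SingletLabel d α β) : ℂ :=
  ((q k.1 k.2.1 k.2.2.1 / d k.1 : ℝ) : ℂ) * η k.1 k.2.2.2.1 * star (η k.1 k.2.2.2.2)

theorem ptA_singletMixture (u : Λ → ℕ → α → IA → ℂ) (w : Λ → ℕ → β → IB → ℂ)
    (η : Λ → ℕ → ℂ) (q : Λ → α → β → ℝ) [Fintype Λ] [Fintype α] [Fintype β] :
    ptA (∑ l, ∑ a, ∑ b, (q l a b : ℂ) • outer fun p : IA × IB => ((√(d l) : ℝ) : ℂ)⁻¹ *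
        ∑ m ∈ range (d l), η l m * u l m a p.1 * w l m b p.2)
      = ∑ k : SingletLabel d α β, singletCoeff q η k •
          vecMulVec (singletProductVec u w k.swap) (star (singletProductVec u w k)) := by
  have hψ : ∀ l a b, (fun p : IA × IB => ((√(d l) : ℝ) : ℂ)⁻¹ *
      ∑ m ∈ range (d l), η l m * u l m a p.1 * w l m b p.2)
        = ((√(d l) : ℝ) : ℂ)⁻¹ • ∑ m : Fin (d l), η l m • kronVec (u l m a) (w l m b) := by
    intro l a b
    funext p
    simp only [Pi.smul_apply, Finset.sum_apply, smul_eq_mul, kronVec, mul_assoc,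
      Fin.sum_univ_eq_sum_range (fun m => η l m * (u l m a p.1 * w l m b p.2))]
  simp only [hψ, ptA_sum, ptA_smul, ptA_outer_sum_smul_kronVec, Finset.smul_sum, smul_smul]
  rw [← Finset.univ_sigma_univ, Finset.sum_sigma]
  simp only [Fintype.sum_prod_type]
  congr! 5 with l - a - b - m - m' -
  congr 1
  have hd : ((√(d l) : ℝ) : ℂ)⁻¹ * ((√(d l) : ℝ) : ℂ)⁻¹ = (d l : ℂ)⁻¹ := by
    rw [← mul_inv, ← Complex.ofReal_mul, Real.mul_self_sqrt (Nat.cast_nonneg _),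
      Complex.ofReal_natCast]
  have hstar : star ((√(d l) : ℝ) : ℂ)⁻¹ = ((√(d l) : ℝ) : ℂ)⁻¹ := by
    rw [star_inv₀, Complex.star_def, Complex.conj_ofReal]
  rw [singletCoeff, star_mul', hstar]
  push_cast
  linear_combination ((q l a b : ℂ) * η l m * star (η l m')) * hd

theorem norm_singletCoeff {q : Λ → α → β → ℝ} (hq : ∀ l a b, 0 ≤ q l a b) {η : Λ → ℕ → ℂ}
    (hη : ∀ l m, m < d l → ‖η l m‖ = 1) (k : SingletLabel d α β) :
    ‖singletCoeff q η k‖ = q k.1 k.2.1 k.2.2.1 / d k.1 := by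
  rw [singletCoeff, norm_mul, norm_mul, norm_star, hη _ _ k.2.2.2.1.isLt, hη _ _ k.2.2.2.2.isLt,
    mul_one, mul_one, Complex.norm_real]
  exact Real.norm_of_nonneg (div_nonneg (hq _ _ _) (Nat.cast_nonneg _))

theorem sum_norm_singletCoeff [Fintype Λ] [Fintype α] [Fintype β] {q : Λ → α → β → ℝ}
    (hq : ∀ l a b, 0 ≤ q l a b) {η : Λ → ℕ → ℂ} (hη : ∀ l m, m < d l → ‖η l m‖ = 1) :
    ∑ k : SingletLabel d α β, ‖singletCoeff q η k‖ = ∑ l, ∑ a, ∑ b, q l a b * d l := by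
  rw [← Finset.univ_sigma_univ, Finset.sum_sigma]
  refine Finset.sum_congr rfl fun l _ => ?_
  simp only [Fintype.sum_prod_type, norm_singletCoeff hq hη, Finset.sum_const, Finset.card_univ,
    Fintype.card_prod, Fintype.card_fin, nsmul_eq_mul, Nat.cast_mul]
  refine Finset.sum_congr rfl fun a _ => Finset.sum_congr rfl fun b _ => ?_
  rcases eq_or_ne (d l) 0 with h | h
  · simp [h]
  · field_simp

end SingletMixture

theorem logNegativity_of_singlet_mixture_general
    {IA IB : Type*} [Fintype IA] [Fintype IB] [DecidableEq IA] [DecidableEq IB]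
    {Λ α β : Type*} [Fintype Λ] [Fintype α] [Fintype β]
    [DecidableEq Λ] [DecidableEq α] [DecidableEq β]
    (d : Λ → ℕ)
    (u : Λ → ℕ → α → IA → ℂ) (w : Λ → ℕ → β → IB → ℂ) (η : Λ → ℕ → ℂ)
    (hu : ∀ l m a l' m' a', m < d l → m' < d l' →
      ∑ i : IA, star (u l m a i) * u l' m' a' i =
        if (l, m, a) = (l', m', a') then 1 else 0)
    (hw : ∀ l m b l' m' b', m < d l → m' < d l' →
      ∑ j : IB, star (w l m b j) * w l' m' b' j =
        if (l, m, b) = (l', m', b') then 1 else 0)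
    (hη : ∀ l m, m < d l → ‖η l m‖ = 1)
    (singlet : Λ → α → β → IA × IB → ℂ)
    (hs : singlet = fun l a b p => ((Real.sqrt (d l) : ℂ))⁻¹ *
      ∑ m ∈ Finset.range (d l), η l m * u l m a p.1 * w l m b p.2)
    (q : Λ → α → β → ℝ) (hq : ∀ l a b, 0 ≤ q l a b)
    (ρ : Matrix (IA × IB) (IA × IB) ℂ)
    (hρ : ρ = ∑ l : Λ, ∑ a : α, ∑ b : β, (q l a b : ℂ) • outer (singlet l a b)) :
    traceNorm (ptA ρ) = ∑ l : Λ, ∑ a : α, ∑ b : β, q l a b * d l ∧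
    Real.log (traceNorm (ptA ρ)) =
      Real.log (∑ l : Λ, (∑ a : α, ∑ b : β, q l a b) * d l) := by
  have hpt : ptA ρ = ∑ k : SingletLabel d α β, singletCoeff q η k •
      vecMulVec (singletProductVec u w k.swap) (star (singletProductVec u w k)) := by
    subst hs hρ
    exact ptA_singletMixture u w η q
  have hnorm : traceNorm (ptA ρ) = ∑ l, ∑ a, ∑ b, q l a b * d l := by
    rw [hpt, (isOrthonormalFamily_singletProductVec hu hw).traceNorm_sum_smul_vecMulVec
      SingletLabel.swap_injective, sum_norm_singletCoeff hq hη]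
  refine ⟨hnorm, ?_⟩
  simp only [hnorm, Finset.sum_mul]

/-- the trace norm of the partial transpose of a singlet mixture is
`Σ q_{λab} d_λ`, hence the logarithmic negativity is `log (Σ_λ p_λ d_λ)` with
`p_λ = Σ_{a,b} q_{λab}`. -/
theorem logNegativity_of_singlet_mixture
    {IA IB : Type*} [Fintype IA] [Fintype IB] [DecidableEq IA] [DecidableEq IB]
    {Λ α β : Type*} [Fintype Λ] [Fintype α] [Fintype β]
    [DecidableEq Λ] [DecidableEq α] [DecidableEq β]
    (d : Λ → ℕ) (hd : ∀ l, 1 ≤ d l)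
    (u : Λ → ℕ → α → IA → ℂ) (w : Λ → ℕ → β → IB → ℂ) (η : Λ → ℕ → ℂ)
    (hu : ∀ l m a l' m' a', m < d l → m' < d l' →
      ∑ i : IA, star (u l m a i) * u l' m' a' i =
        if (l, m, a) = (l', m', a') then 1 else 0)
    (hw : ∀ l m b l' m' b', m < d l → m' < d l' →
      ∑ j : IB, star (w l m b j) * w l' m' b' j =
        if (l, m, b) = (l', m', b') then 1 else 0)
    (hη : ∀ l m, m < d l → ‖η l m‖ = 1)
    (singlet : Λ → α → β → IA × IB → ℂ)
    (hs : singlet = fun l a b p => ((Real.sqrt (d l) : ℂ))⁻¹ *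
      ∑ m ∈ Finset.range (d l), η l m * u l m a p.1 * w l m b p.2)
    (q : Λ → α → β → ℝ) (hq : ∀ l a b, 0 ≤ q l a b)
    (hq1 : ∑ l : Λ, ∑ a : α, ∑ b : β, q l a b = 1)
    (ρ : Matrix (IA × IB) (IA × IB) ℂ)
    (hρ : ρ = ∑ l : Λ, ∑ a : α, ∑ b : β, (q l a b : ℂ) • outer (singlet l a b)) :
    traceNorm (ptA ρ) = ∑ l : Λ, ∑ a : α, ∑ b : β, q l a b * d l ∧
    Real.log (traceNorm (ptA ρ)) =
      Real.log (∑ l : Λ, (∑ a : α, ∑ b : β, q l a b) * d l) :=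
  logNegativity_of_singlet_mixture_general d u w η hu hw hη singlet hs q hq ρ hρ
end
end

section
/- Let p_λ = D_λ^{(2L)} · D_λ^{(2L)} / D_0^{(4L)} with D_λ^{(2L)} = ((2λ+1)/(L+λ+1)) C(2L, L+λ) and D_0^{(4L)} the Catalan number C(4L,2L)/(2L+1). Then (p_λ)_{λ=0}^{L} is a probability distribution: p_λ ≥ 0 and Σ_{λ=0}^{L} p_λ = 1. -/
open Finset

noncomputable section

/-- `D_λ^{(L)}` for `L = 2n`: the multiplicity `((2λ+1)/(n+λ+1))·C(2n, n+λ)` of the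
spin-`λ` irrep. -/
def Dq (n lam : ℕ) : ℚ :=
  ((2 * lam + 1 : ℚ) / (n + lam + 1)) * (Nat.choose (2 * n) (n + lam))

theorem vand_sq (L : ℕ) :
    (4*L).choose (2*L) = ∑ j ∈ range (2*L+1), ((2*L).choose j)^2 := by
  have h := Nat.add_choose_eq (2*L) (2*L) (2*L)
  rw [Finset.Nat.sum_antidiagonal_eq_sum_range_succ_mk] at h
  rw [show 4*L = 2*L + 2*L by ring, h]
  refine Finset.sum_congr rfl fun j hj => ?_
  rw [Finset.mem_range] at hj
  rw [show 2*L - j = 2*L - j from rfl, Nat.choose_symm (by omega), sq]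

theorem vand_cross (L : ℕ) (hL : 1 ≤ L) :
    (4*L).choose (2*L+1) = ∑ j ∈ range (2*L), (2*L).choose j * (2*L).choose (j+1) := by
  have h := Nat.add_choose_eq (2*L) (2*L) (2*L-1)
  rw [Finset.Nat.sum_antidiagonal_eq_sum_range_succ_mk] at h
  have h2 : (4*L).choose (2*L+1) = (4*L).choose (2*L-1) := by
    rw [← Nat.choose_symm (show 2*L+1 ≤ 4*L by omega)]
    congr 1; omega
  rw [h2, show 4*L = 2*L + 2*L by ring, h, show (2*L-1).succ = 2*L by omega]
  refine Finset.sum_congr rfl fun j hj => ?_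
  rw [Finset.mem_range] at hj
  congr 1
  rw [← Nat.choose_symm (show j+1 ≤ 2*L by omega)]
  congr 1; omega

/-- the irrep weights `p_λ = (D_λ^{(2L)})² / D_0^{(4L)}` form a probability
distribution on `{0,…,L}`. -/
theorem irrep_weights_prob (L : ℕ) (hL : 1 ≤ L) :
    (∀ lam : ℕ, 0 ≤ (Dq L lam) ^ 2 / Dq (2 * L) 0) ∧
    ∑ lam ∈ Finset.range (L + 1), (Dq L lam) ^ 2 / Dq (2 * L) 0 = 1 := by
  set b : ℕ → ℚ := fun j => ((2*L).choose j : ℚ) with hb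
  have hD0 : Dq (2*L) 0 = ((4*L).choose (2*L) : ℚ) / (2*(L:ℚ)+1) := by
    rw [Dq]
    rw [show 2*(2*L) = 4*L by ring, Nat.add_zero]
    push_cast
    ring
  have hSpos : 0 < ((4*L).choose (2*L) : ℚ) := by
    exact_mod_cast Nat.choose_pos (show 2*L ≤ 4*L by omega)
  have hD0pos : 0 < Dq (2*L) 0 := by rw [hD0]; positivity
  refine ⟨fun lam => div_nonneg (sq_nonneg _) hD0pos.le, ?_⟩
  -- D_λ as a difference of binomials
  have hDq : ∀ lam : ℕ, Dq L lam = b (L+lam) - b (L+lam+1) := by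
    intro lam
    by_cases hle : lam ≤ L
    · have key : ((2*L).choose (L+lam+1) : ℚ) * ((L:ℚ)+lam+1)
          = ((2*L).choose (L+lam) : ℚ) * ((L:ℚ) - lam) := by
        have h := Nat.choose_succ_right_eq (2*L) (L+lam)
        have h2 : 2*L - (L+lam) = L - lam := by omega
        rw [h2] at h
        have := congrArg (fun n : ℕ => (n : ℚ)) h
        push_cast [Nat.cast_sub hle] at this
        convert this using 2 <;> push_cast <;> ring
      have hne : ((L:ℚ)+lam+1) ≠ 0 := by positivity
      rw [Dq, div_mul_eq_mul_div, div_eq_iff hne]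
      simp only [hb]
      push_cast
      linear_combination key
    · have h1 : (2*L).choose (L+lam) = 0 := Nat.choose_eq_zero_of_lt (by omega)
      have h2 : (2*L).choose (L+lam+1) = 0 := Nat.choose_eq_zero_of_lt (by omega)
      simp [Dq, hb, h1, h2]
  have hsymm : ∀ j, j ≤ 2*L → b (2*L - j) = b j := by
    intro j hj; simp only [hb]; rw [Nat.choose_symm hj]
  set U := ∑ j ∈ range L, b j ^ 2 with hU
  set V := ∑ j ∈ range L, b j * b (j+1) with hV
  have hrefl1 : ∑ j ∈ range L, b (L+1+j)^2 = U := by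
    rw [← Finset.sum_range_reflect (fun j => b (L+1+j)^2) L, hU]
    refine Finset.sum_congr rfl fun j hj => ?_
    rw [Finset.mem_range] at hj
    rw [show L+1+(L-1-j) = 2*L - j by omega, hsymm j (by omega)]
  have hrefl2 : ∑ j ∈ range L, b (L+j) * b (L+j+1) = V := by
    rw [← Finset.sum_range_reflect (fun j => b (L+j) * b (L+j+1)) L, hV]
    refine Finset.sum_congr rfl fun j hj => ?_
    rw [Finset.mem_range] at hj
    rw [show L+(L-1-j) = 2*L - (j+1) by omega]
    rw [show 2*L - (j+1) + 1 = 2*L - j by omega, hsymm (j+1) (by omega), hsymm j (by omega)]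
    ring
  have hS2 : ((4*L).choose (2*L) : ℚ) = U + b L ^ 2 + U := by
    have hc : ((4*L).choose (2*L) : ℚ) = ∑ j ∈ range (2*L+1), b j ^ 2 := by
      rw [vand_sq L]; push_cast; rfl
    rw [hc, show 2*L+1 = (L+1)+L by ring, Finset.sum_range_add, Finset.sum_range_succ,
      hrefl1, ← hU]
  have hT : ((4*L).choose (2*L+1) : ℚ) = V + V := by
    have hc : ((4*L).choose (2*L+1) : ℚ) = ∑ j ∈ range (2*L), b j * b (j+1) := by
      rw [vand_cross L hL]; push_cast; rfl
    rw [hc, show 2*L = L+L by ring, Finset.sum_range_add, hrefl2, ← hV]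
  have hb2L1 : b (2*L+1) = 0 := by
    simp only [hb]; rw [Nat.choose_eq_zero_of_lt (by omega)]; norm_num
  have hA : ∑ lam ∈ range (L+1), b (L+lam)^2 = U + b L ^ 2 := by
    rw [Finset.sum_range_succ' (fun lam => b (L+lam)^2) L]
    have e : ∑ j ∈ range L, b (L+(j+1))^2 = U := by
      rw [← hrefl1]
      exact Finset.sum_congr rfl fun j _ => by rw [show L+(j+1) = L+1+j by omega]
    rw [e, Nat.add_zero]
  have hB : ∑ lam ∈ range (L+1), b (L+lam+1)^2 = U := by
    rw [Finset.sum_range_succ, show L+L+1 = 2*L+1 by ring, hb2L1]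
    have e : ∑ j ∈ range L, b (L+j+1)^2 = U := by
      rw [← hrefl1]
      exact Finset.sum_congr rfl fun j _ => by rw [show L+j+1 = L+1+j by omega]
    rw [e]
    norm_num
  have hC : ∑ lam ∈ range (L+1), b (L+lam) * b (L+lam+1) = V := by
    rw [Finset.sum_range_succ, show L+L+1 = 2*L+1 by ring, hb2L1, mul_zero, add_zero]
    exact hrefl2
  have expand : ∑ lam ∈ range (L+1), Dq L lam ^ 2
      = (∑ lam ∈ range (L+1), b (L+lam)^2) + (∑ lam ∈ range (L+1), b (L+lam+1)^2)
        - 2 * ∑ lam ∈ range (L+1), b (L+lam) * b (L+lam+1) := by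
    rw [← Finset.sum_add_distrib, Finset.mul_sum, ← Finset.sum_sub_distrib]
    exact Finset.sum_congr rfl fun lam _ => by rw [hDq lam]; ring
  have hsum : ∑ lam ∈ range (L+1), Dq L lam ^ 2
      = ((4*L).choose (2*L) : ℚ) - ((4*L).choose (2*L+1) : ℚ) := by
    rw [expand, hA, hB, hC, hS2, hT]; ring
  have hcat : ((4*L).choose (2*L+1) : ℚ) * (2*(L:ℚ)+1) = ((4*L).choose (2*L) : ℚ) * (2*L) := by
    have h := Nat.choose_succ_right_eq (4*L) (2*L)
    rw [show 4*L - 2*L = 2*L by omega] at h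
    have := congrArg (fun n : ℕ => (n : ℚ)) h
    push_cast at this
    convert this using 2 <;> push_cast <;> ring
  rw [← Finset.sum_div, hsum, hD0]
  have h2L1 : (2*(L:ℚ)+1) ≠ 0 := by positivity
  field_simp
  linear_combination -hcat
end
end
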